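/- arXiv:1103.2568 — 2 statements merged into one kernel-verified Lean document; each statement's English description precedes it below -/
import Mathlib

section
/- With g_κ(X,Y) = g₀(X + κ(X)^#, Y + κ(Y)^#) as above, where κ is 𝔱-valued and T-horizontal for an isometric torus action, the Riemannian volume densities agree: dvol_{g_κ} = dvol_{g₀}. -/
/-!
Since `κ ∘ φ = 0`, the endomorphism `N = φ ∘ κ` squares to zero, hence has characteristic
polynomial `Xⁿ`; evaluating it at `-1` gives `det A = 1` for `A = 1 + N`. The Gram matrix of
`g_κ` in a basis `b` is the Gram matrix of `g₀` in the basis `A ∘ b`, i.e. `Aᵀ G A`, so its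
determinant is `(det A)² · det G = det G`.
-/

open Polynomial Module

theorem LinearMap.det_one_add_of_isNilpotent {R M : Type*} [CommRing R] [IsDomain R]
    [AddCommGroup M] [Module R M] [Module.Free R M] [Module.Finite R M]
    {N : Module.End R M} (hN : IsNilpotent N) : (1 + N).det = 1 := by
  have h := N.eval_charpoly (-1)
  rw [hN.charpoly_eq_X_pow_finrank, eval_pow, eval_X, map_neg, map_one,
    show -1 - N = (-1 : R) • (1 + N) by module, LinearMap.det_smul] at h
  exact (mul_right_injective₀ (pow_ne_zero _ (neg_ne_zero.mpr one_ne_zero))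
    (h.symm.trans (mul_one _).symm))

theorem LinearMap.isNilpotent_comp_of_comp_eq_zero {R M N : Type*} [CommSemiring R]
    [AddCommMonoid M] [Module R M] [AddCommMonoid N] [Module R N]
    {f : M →ₗ[R] N} {g : N →ₗ[R] M} (h : f ∘ₗ g = 0) : IsNilpotent (g ∘ₗ f) :=
  ⟨2, by rw [pow_two, Module.End.mul_eq_comp, LinearMap.comp_assoc, ← LinearMap.comp_assoc f g f,
      h, LinearMap.zero_comp, LinearMap.comp_zero]⟩

theorem LinearMap.det_toMatrix₂_compl₁₂_self {R M ι : Type*} [CommRing R] [AddCommGroup M]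
    [Module R M] [Fintype ι] [DecidableEq ι] (b : Basis ι R M) (B : M →ₗ[R] M →ₗ[R] R)
    (A : Module.End R M) :
    (LinearMap.toMatrix₂ b b (B.compl₁₂ A A)).det = A.det ^ 2 * (LinearMap.toMatrix₂ b b B).det := by
  rw [LinearMap.toMatrix₂_compl₁₂ b b, Matrix.det_mul, Matrix.det_mul, Matrix.det_transpose,
    LinearMap.det_toMatrix]
  ring

theorem Matrix.gram_eq_toMatrix₂_innerₗ {V ι : Type*} [NormedAddCommGroup V]
    [InnerProductSpace ℝ V] [Fintype ι] [DecidableEq ι] (b : Basis ι ℝ V) :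
    Matrix.gram ℝ b = LinearMap.toMatrix₂ b b (innerₗ V) := by
  ext i j
  rw [Matrix.gram_apply, LinearMap.toMatrix₂_apply, innerₗ_apply_apply]

theorem Matrix.det_gram_comp {V ι : Type*} [NormedAddCommGroup V] [InnerProductSpace ℝ V]
    [Fintype ι] [DecidableEq ι] (b : Basis ι ℝ V) (A : Module.End ℝ V) :
    (Matrix.gram ℝ (A ∘ b)).det = A.det ^ 2 * (Matrix.gram ℝ b).det := by
  have hgram : Matrix.gram ℝ (A ∘ b) = LinearMap.toMatrix₂ b b ((innerₗ V).compl₁₂ A A) := by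
    ext i j
    rw [Matrix.gram_apply, LinearMap.toMatrix₂_apply, LinearMap.compl₁₂_apply, innerₗ_apply_apply]
    rfl
  rw [hgram, Matrix.gram_eq_toMatrix₂_innerₗ, LinearMap.det_toMatrix₂_compl₁₂_self]

/-- pointwise formulation at an arbitrary point `x ∈ M`:
with `φ : 𝔱 → V` the fundamental-vector-field map and `κ : V → 𝔱` the (`T`-horizontal)
value of the 1-form at `x`, the metric `g_κ(X,Y) = g₀(X + φ(κ X), Y + φ(κ Y))` is the
pull-back of `g₀` under the linear map `A = Id + φ∘κ`.  Since `κ ∘ φ = 0`, `A` is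
unipotent, `det A = 1`, and the Riemannian volume densities of `g_κ` and `g₀` agree:
in any basis `b` the Gram determinants (hence the densities `√det(g(bᵢ,bⱼ))`) coincide. -/
theorem gKappa_volume_density_eq
    (V : Type*) [NormedAddCommGroup V] [InnerProductSpace ℝ V] [FiniteDimensional ℝ V]
    (𝔱 : Type*) [AddCommGroup 𝔱] [Module ℝ 𝔱]
    (φ : 𝔱 →ₗ[ℝ] V) (κ : V →ₗ[ℝ] 𝔱) (hhor : κ.comp φ = 0) :
    LinearMap.det (LinearMap.id + φ.comp κ) = 1 ∧
    ∀ (ι : Type) [Fintype ι] [DecidableEq ι] (b : Module.Basis ι ℝ V),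
      Real.sqrt (Matrix.det (Matrix.of fun i j =>
          (inner ℝ (b i + φ (κ (b i))) (b j + φ (κ (b j))) : ℝ)))
        = Real.sqrt (Matrix.det (Matrix.of fun i j => (inner ℝ (b i) (b j) : ℝ))) := by
  have hdet : LinearMap.det (1 + φ ∘ₗ κ) = 1 :=
    LinearMap.det_one_add_of_isNilpotent (LinearMap.isNilpotent_comp_of_comp_eq_zero hhor)
  refine ⟨hdet, fun ι _ _ b => congrArg Real.sqrt ?_⟩
  change (Matrix.gram ℝ (⇑(1 + φ ∘ₗ κ : Module.End ℝ V) ∘ b)).det = (Matrix.gram ℝ b).det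
  rw [Matrix.det_gram_comp, hdet, one_pow, one_mul]
end

section
/- Call a linear map j : ℝ² → su(m) generic if no nonzero element of su(m) commutes with both j_{Z₁} and j_{Z₂}. If j is generic and A ∈ SU(m) satisfies A j_{Z_k} A^{-1} = j_{Z_k} for k = 1,2, then A is a scalar matrix, i.e., A = ζ I_m for some m-th root of unity ζ. -/
open Complex Matrix

/-!
Since `j_{Z₁}` and `j_{Z₂}` are skew-Hermitian, the matrices commuting with both form an algebra
closed under `ᴴ`. For such a matrix `X`, the traceless part `Y = X - (tr X / m) • 1` gives two
elements `Y - Yᴴ` and `I • (Y + Yᴴ)` of `su(m)` commuting with both, so genericity kills them and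
`Y = 0`. A matrix conjugating each `j_{Z_k}` to itself commutes with it, hence is a scalar `ζ • 1`,
and `det (ζ • 1) = ζ ^ m`.
-/

variable {n : Type*} [Fintype n]

def IsGeneric (s : Set (Matrix n n ℂ)) : Prop :=
  ∀ B : Matrix n n ℂ, Bᴴ = -B → B.trace = 0 → (∀ S ∈ s, Commute B S) → B = 0

theorem Commute.conjTranspose_left_of_skew {X S : Matrix n n ℂ} (hS : Sᴴ = -S)
    (h : Commute X S) : Commute Xᴴ S := by
  simpa [star_eq_conjTranspose, hS] using h.star_star

variable [DecidableEq n]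

theorem commute_of_mul_mul_nonsing_inv_eq {A S : Matrix n n ℂ} (hA : IsUnit A.det)
    (h : A * S * A⁻¹ = S) : Commute A S := by
  calc A * S = A * S * A⁻¹ * A := (nonsing_inv_mul_cancel_right _ _ hA).symm
    _ = S * A := by rw [h]

namespace IsGeneric

variable {s : Set (Matrix n n ℂ)}

theorem eq_zero_of_trace_eq_zero (hgen : IsGeneric s) (hs : ∀ S ∈ s, Sᴴ = -S)
    {Y : Matrix n n ℂ} (htr : Y.trace = 0) (hY : ∀ S ∈ s, Commute Y S) : Y = 0 := by
  have hYH : ∀ S ∈ s, Commute Yᴴ S := fun S hS => (hY S hS).conjTranspose_left_of_skew (hs S hS)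
  have htrH : Yᴴ.trace = 0 := by rw [trace_conjTranspose, htr, star_zero]
  have hskew : Y - Yᴴ = 0 :=
    hgen _ (by rw [conjTranspose_sub, conjTranspose_conjTranspose, neg_sub])
      (by rw [trace_sub, htr, htrH, sub_zero])
      fun S hS => (hY S hS).sub_left (hYH S hS)
  have hherm : I • (Y + Yᴴ) = 0 :=
    hgen _ (by
        rw [conjTranspose_smul, conjTranspose_add, conjTranspose_conjTranspose, star_def,
          conj_I, add_comm, neg_smul])
      (by rw [trace_smul, trace_add, htr, htrH, add_zero, smul_zero])
      fun S hS => ((hY S hS).add_left (hYH S hS)).smul_left I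
  have hsum : Y + Yᴴ = 0 := (smul_eq_zero.mp hherm).resolve_left I_ne_zero
  have hdouble : (2 : ℂ) • Y = 0 := by
    rw [two_smul]; linear_combination (norm := abel) hskew + hsum
  exact (smul_eq_zero.mp hdouble).resolve_left two_ne_zero

theorem eq_smul_one_of_commute (hgen : IsGeneric s) (hs : ∀ S ∈ s, Sᴴ = -S)
    (hn : Fintype.card n ≠ 0) {X : Matrix n n ℂ} (hX : ∀ S ∈ s, Commute X S) :
    X = (X.trace / Fintype.card n) • (1 : Matrix n n ℂ) := by
  rw [← sub_eq_zero]
  refine hgen.eq_zero_of_trace_eq_zero hs ?_ fun S hS =>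
    (hX S hS).sub_left ((Commute.one_left S).smul_left _)
  rw [trace_sub, trace_smul, trace_one, smul_eq_mul, div_mul_cancel₀ _ (Nat.cast_ne_zero.mpr hn),
    sub_self]

end IsGeneric

theorem generic_commutant_is_scalar_general (m : ℕ) (hm : 3 ≤ m)
    (j : (ℝ × ℝ) →ₗ[ℝ] Matrix (Fin m) (Fin m) ℂ)
    (hskew : ∀ Z, (j Z)ᴴ = -(j Z))
    (hgen : ∀ B : Matrix (Fin m) (Fin m) ℂ, Bᴴ = -B → B.trace = 0 →
      B * j (1, 0) = j (1, 0) * B → B * j (0, 1) = j (0, 1) * B → B = 0)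
    (A : Matrix (Fin m) (Fin m) ℂ) (hdet : A.det = 1)
    (hc₁ : A * j (1, 0) * A⁻¹ = j (1, 0)) (hc₂ : A * j (0, 1) * A⁻¹ = j (0, 1)) :
    ∃ ζ : ℂ, ζ ^ m = 1 ∧ A = ζ • (1 : Matrix (Fin m) (Fin m) ℂ) := by
  have hgeneric : IsGeneric ({j (1, 0), j (0, 1)} : Set (Matrix (Fin m) (Fin m) ℂ)) :=
    fun B hB htr hcomm => hgen B hB htr (hcomm _ (by simp)).eq (hcomm _ (by simp)).eq
  have hs : ∀ S ∈ ({j (1, 0), j (0, 1)} : Set (Matrix (Fin m) (Fin m) ℂ)), Sᴴ = -S := by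
    simp [hskew]
  have hunit : IsUnit A.det := hdet ▸ isUnit_one
  have hcomm : ∀ S ∈ ({j (1, 0), j (0, 1)} : Set (Matrix (Fin m) (Fin m) ℂ)), Commute A S := by
    simp [commute_of_mul_mul_nonsing_inv_eq hunit hc₁, commute_of_mul_mul_nonsing_inv_eq hunit hc₂]
  obtain ⟨ζ, hA⟩ : ∃ ζ : ℂ, A = ζ • (1 : Matrix (Fin m) (Fin m) ℂ) :=
    ⟨_, by simpa only [Fintype.card_fin] using
      hgeneric.eq_smul_one_of_commute hs (by rw [Fintype.card_fin]; omega) hcomm⟩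
  refine ⟨ζ, ?_, hA⟩
  rw [← hdet, hA, det_smul, det_one, mul_one, Fintype.card_fin]

/-- if `j : ℝ² → su(m)` is generic (no nonzero element of `su(m)` commutes
with both `j_{Z₁}` and `j_{Z₂}`) and `A ∈ SU(m)` satisfies `A j_{Z_k} A⁻¹ = j_{Z_k}` for
`k = 1, 2`, then `A` is a scalar matrix `ζ I_m` with `ζ^m = 1`. -/
theorem generic_commutant_is_scalar (m : ℕ) (hm : 3 ≤ m)
    (j : (ℝ × ℝ) →ₗ[ℝ] Matrix (Fin m) (Fin m) ℂ)
    (hskew : ∀ Z, (j Z)ᴴ = -(j Z)) (htrace : ∀ Z, (j Z).trace = 0)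
    (hgen : ∀ B : Matrix (Fin m) (Fin m) ℂ, Bᴴ = -B → B.trace = 0 →
      B * j (1, 0) = j (1, 0) * B → B * j (0, 1) = j (0, 1) * B → B = 0)
    (A : Matrix (Fin m) (Fin m) ℂ) (hA : Aᴴ * A = 1) (hdet : A.det = 1)
    (hc₁ : A * j (1, 0) * A⁻¹ = j (1, 0)) (hc₂ : A * j (0, 1) * A⁻¹ = j (0, 1)) :
    ∃ ζ : ℂ, ζ ^ m = 1 ∧ A = ζ • (1 : Matrix (Fin m) (Fin m) ℂ) :=
  generic_commutant_is_scalar_general m hm j hskew hgen A hdet hc₁ hc₂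
end
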